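/- Main theorem (necessity direction in abstract form): Let (Ω, P) carry a jointly measurable family (L_x)_{x>0} of nonnegative random variables, all with the same non-trivial distribution, and let f : (0,∞) → [0,∞) be measurable. Suppose a random variable I satisfies I = ∫_0^∞ f(x) L_x dx a.s. If P(I < ∞) = 1, then ∫_0^∞ f(x) dx < ∞. -/

import Mathlib

/-!
Jeulin's lemma. Since the `L x` share a non-degenerate law, there are `c > 0` and `δ > 0` with
`P (c ≤ L x) = δ` for every `x`. On the event `A = {I ≤ n}`, with `n` so large that
`P Aᶜ < δ`, Markov's inequality gives `E[L x; A] ≥ c (δ - P Aᶜ) =: κ > 0` uniformly in `x`,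
so by Tonelli `κ ∫ f ≤ ∫ f(x) E[L x; A] dx = E[I; A] ≤ n`.
-/

open MeasureTheory ProbabilityTheory ENNReal Function Set

section

variable {X Ω : Type*} [MeasurableSpace X] [MeasurableSpace Ω] {μ : Measure X} {P : Measure Ω}

lemma exists_ne_zero_measure_le_ne_zero {Y : Ω → ℝ≥0∞} (hY : ¬ ∀ᵐ ω ∂P, Y ω = 0) :
    ∃ c ≠ 0, P {ω | c ≤ Y ω} ≠ 0 := by
  by_contra! h
  refine hY (ae_iff.2 (measure_mono_null (fun ω hω => ?_)
    (measure_iUnion_null fun n : ℕ => h _ (ENNReal.inv_ne_zero.2 (natCast_ne_top n)))))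
  obtain ⟨n, hn⟩ := ENNReal.exists_inv_nat_lt hω
  exact mem_iUnion.2 ⟨n, hn.le⟩

lemma exists_nat_measure_lt_lt [IsFiniteMeasure P] {J : Ω → ℝ≥0∞} (hJ : Measurable J)
    (hJfin : ∀ᵐ ω ∂P, J ω < ∞) {ε : ℝ≥0∞} (hε : 0 < ε) :
    ∃ n : ℕ, P {ω | (n : ℝ≥0∞) < J ω} < ε := by
  have hnull : P (⋂ n : ℕ, {ω | (n : ℝ≥0∞) < J ω}) = 0 := by
    refine measure_mono_null (fun ω hω => ?_) (ae_iff.1 hJfin)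
    intro hJω
    obtain ⟨n, hn⟩ := ENNReal.exists_nat_gt hJω.ne
    exact (mem_iInter.1 hω n).not_gt hn
  have hlim := tendsto_measure_iInter_atTop (μ := P) (s := fun n : ℕ => {ω | (n : ℝ≥0∞) < J ω})
    (fun n => (hJ measurableSet_Ioi).nullMeasurableSet)
    (fun i j hij ω hω => (Nat.cast_le.2 hij).trans_lt (mem_ofPred.1 hω)) ⟨0, measure_ne_top P _⟩
  rw [hnull] at hlim
  exact ((tendsto_order.1 hlim).2 ε hε).exists

lemma mul_measure_sub_le_setLIntegral {Y : Ω → ℝ≥0∞} (hY : Measurable Y) {A : Set Ω}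
    (hA : MeasurableSet A) (c : ℝ≥0∞) :
    c * (P {ω | c ≤ Y ω} - P Aᶜ) ≤ ∫⁻ ω in A, Y ω ∂P :=
  calc c * (P {ω | c ≤ Y ω} - P Aᶜ) ≤ c * P ({ω | c ≤ Y ω} \ Aᶜ) := by
        gcongr; exact le_measure_sdiff
    _ = c * P.restrict A {ω | c ≤ Y ω} := by
        rw [Measure.restrict_apply' hA, sdiff_compl]
    _ ≤ ∫⁻ ω in A, Y ω ∂P := mul_meas_ge_le_lintegral hY c

lemma lintegral_lt_top_of_lintegral_mul_lt_top {g h : X → ℝ≥0∞} {κ : ℝ≥0∞} (hκ : κ ≠ 0)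
    (hh : ∀ᵐ x ∂μ, κ ≤ h x) (hgh : ∫⁻ x, g x * h x ∂μ < ∞) : ∫⁻ x, g x ∂μ < ∞ := by
  have : (∫⁻ x, g x ∂μ) * κ ≤ ∫⁻ x, g x * h x ∂μ :=
    (lintegral_mul_const_le κ g).trans (lintegral_mono_ae (hh.mono fun x hx => by gcongr))
  exact lt_top_of_mul_ne_top_left (this.trans_lt hgh).ne hκ

theorem lintegral_lt_top_of_forall_measure_le_ge [SFinite μ] [IsFiniteMeasure P]
    {L : X → Ω → ℝ≥0∞} (hL : Measurable (uncurry L)) {g : X → ℝ≥0∞} (hg : Measurable g)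
    {c δ : ℝ≥0∞} (hc : c ≠ 0) (hδ : 0 < δ) (hLδ : ∀ᵐ x ∂μ, δ ≤ P {ω | c ≤ L x ω})
    (hfin : ∀ᵐ ω ∂P, ∫⁻ x, g x * L x ω ∂μ < ∞) : ∫⁻ x, g x ∂μ < ∞ := by
  set J : Ω → ℝ≥0∞ := fun ω => ∫⁻ x, g x * L x ω ∂μ
  have hgL : Measurable fun p : Ω × X => g p.2 * L p.2 p.1 :=
    (hg.comp measurable_snd).mul (hL.comp measurable_swap)
  have hJ : Measurable J := hgL.lintegral_prod_right'
  obtain ⟨n, hn⟩ := exists_nat_measure_lt_lt hJ hfin hδ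
  set A : Set Ω := {ω | J ω ≤ n}
  have hA : MeasurableSet A := hJ measurableSet_Iic
  have hAc : Aᶜ = {ω | (n : ℝ≥0∞) < J ω} := by ext; simp [A]
  have hlower : ∀ᵐ x ∂μ, c * (δ - P Aᶜ) ≤ ∫⁻ ω in A, L x ω ∂P :=
    hLδ.mono fun x hx => le_trans (by gcongr)
      (mul_measure_sub_le_setLIntegral hL.of_uncurry_left hA c)
  have hκ : c * (δ - P Aᶜ) ≠ 0 := mul_ne_zero hc (tsub_pos_of_lt (hAc ▸ hn)).ne'
  have htonelli : ∫⁻ x, g x * ∫⁻ ω in A, L x ω ∂P ∂μ = ∫⁻ ω in A, J ω ∂P :=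
    calc ∫⁻ x, g x * ∫⁻ ω in A, L x ω ∂P ∂μ = ∫⁻ x, ∫⁻ ω in A, g x * L x ω ∂P ∂μ :=
          lintegral_congr fun x => (lintegral_const_mul _ hL.of_uncurry_left).symm
      _ = ∫⁻ ω in A, J ω ∂P := lintegral_lintegral_swap (hgL.comp measurable_swap).aemeasurable
  have hbound : ∫⁻ ω in A, J ω ∂P < ∞ :=
    calc ∫⁻ ω in A, J ω ∂P ≤ ∫⁻ _ in A, (n : ℝ≥0∞) ∂P := setLIntegral_mono' hA fun _ hω => hω
      _ = n * P A := setLIntegral_const A _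
      _ < ∞ := mul_lt_top (natCast_lt_top n) (measure_lt_top P A)
  exact lintegral_lt_top_of_lintegral_mul_lt_top hκ hlower (htonelli ▸ hbound)

/-- Jeulin's lemma. -/
theorem lintegral_lt_top_of_ae_map_eq [SFinite μ] [IsFiniteMeasure P]
    {L : X → Ω → ℝ≥0∞} (hL : Measurable (uncurry L)) {g : X → ℝ≥0∞} (hg : Measurable g)
    {Y : Ω → ℝ≥0∞} (hY : Measurable Y) (hLY : ∀ᵐ x ∂μ, P.map (L x) = P.map Y)
    (hY0 : ¬ ∀ᵐ ω ∂P, Y ω = 0) (hfin : ∀ᵐ ω ∂P, ∫⁻ x, g x * L x ω ∂μ < ∞) :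
    ∫⁻ x, g x ∂μ < ∞ := by
  obtain ⟨c, hc, hδ⟩ := exists_ne_zero_measure_le_ne_zero hY0
  refine lintegral_lt_top_of_forall_measure_le_ge hL hg hc (pos_iff_ne_zero.2 hδ) ?_ hfin
  filter_upwards [hLY] with x hx
  exact (IdentDistrib.measure_mem_eq ⟨hL.of_uncurry_left.aemeasurable, hY.aemeasurable, hx⟩
    measurableSet_Ici).ge
end

theorem necessity_abstract_general {Ω : Type*} [MeasurableSpace Ω]
    (P : Measure Ω) [IsProbabilityMeasure P]
    (L : ℝ → Ω → ℝ≥0∞) (hLmeas : Measurable (Function.uncurry L))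
    (hLid : ∀ x > (0 : ℝ), P.map (L x) = P.map (L 1))
    (hLnontriv : ¬ (∀ᵐ ω ∂P, L 1 ω = 0))
    (f : ℝ → ℝ) (hf : Measurable f)
    (I : Ω → ℝ≥0∞) (hImeas : Measurable I)
    (hI : ∀ᵐ ω ∂P, I ω = ∫⁻ x in Set.Ioi (0 : ℝ), ENNReal.ofReal (f x) * L x ω)
    (hfin : P {ω | I ω < ∞} = 1) :
    (∫⁻ x in Set.Ioi (0 : ℝ), ENNReal.ofReal (f x)) < ∞ := by
  have hIfin : ∀ᵐ ω ∂P, I ω < ∞ :=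
    (ae_iff_measure_eq (hImeas measurableSet_Iio).nullMeasurableSet).2 (by rw [measure_univ]; exact hfin)
  refine lintegral_lt_top_of_ae_map_eq hLmeas hf.ennreal_ofReal hLmeas.of_uncurry_left
    (ae_restrict_of_forall_mem measurableSet_Ioi hLid) hLnontriv ?_
  filter_upwards [hIfin, hI] with ω hω hωI
  exact hωI ▸ hω

/-- Abstract necessity direction of the main theorem: if `(L x)_{x>0}` is a jointly
measurable family of nonnegative, identically distributed, non-trivial random
variables, and `I = ∫_0^∞ f(x) L x dx` a.s. with `P(I < ∞) = 1`, then
`∫_0^∞ f(x) dx < ∞`. -/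
theorem necessity_abstract {Ω : Type*} [MeasurableSpace Ω]
    (P : Measure Ω) [IsProbabilityMeasure P]
    (L : ℝ → Ω → ℝ≥0∞) (hLmeas : Measurable (Function.uncurry L))
    (hLid : ∀ x > (0 : ℝ), P.map (L x) = P.map (L 1))
    (hLnontriv : ¬ (∀ᵐ ω ∂P, L 1 ω = 0))
    (f : ℝ → ℝ) (hf : Measurable f) (hf0 : ∀ x, 0 ≤ f x)
    (I : Ω → ℝ≥0∞) (hImeas : Measurable I)
    (hI : ∀ᵐ ω ∂P, I ω = ∫⁻ x in Set.Ioi (0 : ℝ), ENNReal.ofReal (f x) * L x ω)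
    (hfin : P {ω | I ω < ∞} = 1) :
    (∫⁻ x in Set.Ioi (0 : ℝ), ENNReal.ofReal (f x)) < ∞ :=
  necessity_abstract_general P L hLmeas hLid hLnontriv f hf I hImeas hI hfin
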